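/- Let k ∈ ℕ, t_j = cos(jπ/k) for j = 0,…,k be the Chebyshev nodes, and p_i(t) = ∏_{j ≠ i} (t − t_j). Then for every i ∈ {0,…,k} and every t ∈ (−1, 1), |p_i(t)/p_i(t_i)| ≤ 2. -/

import Mathlib

/-!
Write `p = ∏ⱼ (X - tⱼ)` for the nodal polynomial of the nodes `tⱼ = cos (jπ/k)`, `k = n + 1`.
Its roots are `±1` and the roots of `Uₙ`, so `2ⁿ p = (X² - 1) Uₙ`, i.e.
`2ⁿ p (cos θ) = -sin θ sin (kθ)`.

Upper bound: write `tᵢ = cos φ` and `cos θ - cos φ = -2 sin ((θ+φ)/2) sin ((θ-φ)/2)`.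
Since `sin (kφ) = 0`, `|sin (kθ)| ≤ k |sin (θ-φ)| ≤ 2k |sin ((θ-φ)/2)|`, and
`sin θ ≤ 2 sin ((θ+φ)/2)` on `[0, π]`; hence `2ⁿ |pᵢ(t)| ≤ 2k` where `p = (X - tᵢ) pᵢ`.

Lower bound: `pᵢ(tᵢ) = p'(tᵢ)`, and `((X² - 1) Uₙ)' = X Uₙ + k Tₖ`, with `Tₖ(tᵢ) = (-1)ⁱ`.
The term `tᵢ Uₙ(tᵢ)` vanishes at interior nodes and has the sign `(-1)ⁱ` at `±1`, so
`2ⁿ |pᵢ(tᵢ)| ≥ k`.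
-/

open Polynomial Real Finset Lagrange

namespace Real

theorem abs_sin_nat_mul_le (n : ℕ) (x : ℝ) : |sin (n * x)| ≤ n * |sin x| := by
  induction n with
  | zero => simp
  | succ n ih =>
    rw [Nat.cast_succ, add_one_mul, sin_add]
    calc |sin (n * x) * cos x + cos (n * x) * sin x|
        ≤ |sin (n * x)| * |cos x| + |cos (n * x)| * |sin x| := by
          rw [← abs_mul, ← abs_mul]; exact abs_add_le _ _
      _ ≤ |sin (n * x)| * 1 + 1 * |sin x| := by
          gcongr <;> exact abs_cos_le_one _
      _ ≤ (n + 1) * |sin x| := by linarith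

theorem abs_sin_le_two_mul_abs_sin_half (x : ℝ) : |sin x| ≤ 2 * |sin (x / 2)| := by
  conv_lhs => rw [← mul_div_cancel₀ x two_ne_zero, sin_two_mul]
  rw [abs_mul, abs_mul, abs_two]
  exact mul_le_of_le_one_right (by positivity) (abs_cos_le_one _)

theorem sin_le_two_mul_sin_add_div_two {θ φ : ℝ} (hθ : θ ∈ Set.Icc 0 π) (hφ : φ ∈ Set.Icc 0 π) :
    sin θ ≤ 2 * sin ((θ + φ) / 2) := by
  obtain ⟨u, rfl⟩ : ∃ u, θ = 2 * u := ⟨θ / 2, by ring⟩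
  obtain ⟨v, rfl⟩ : ∃ v, φ = 2 * v := ⟨φ / 2, by ring⟩
  obtain ⟨hθ₀, hθπ⟩ := hθ
  obtain ⟨hφ₀, hφπ⟩ := hφ
  have hsu : 0 ≤ sin u := sin_nonneg_of_nonneg_of_le_pi (by linarith) (by linarith)
  have hsv : 0 ≤ sin v := sin_nonneg_of_nonneg_of_le_pi (by linarith) (by linarith)
  have hcu : 0 ≤ cos u := cos_nonneg_of_mem_Icc ⟨by linarith, by linarith⟩
  have hcv : 0 ≤ cos v := cos_nonneg_of_mem_Icc ⟨by linarith, by linarith⟩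
  rw [show (2 * u + 2 * v) / 2 = u + v by ring, sin_two_mul, sin_add]
  rcases le_total u v with huv | hvu
  · have := sin_le_sin_of_le_of_le_pi_div_two (by linarith) (by linarith) huv
    nlinarith
  · have := cos_le_cos_of_nonneg_of_le_pi (by linarith) (by linarith) hvu
    nlinarith

theorem abs_sin_nat_mul_le_of_sin_nat_mul_eq_zero (k : ℕ) (θ : ℝ) {φ : ℝ}
    (hφ : sin (k * φ) = 0) : |sin (k * θ)| ≤ 2 * k * |sin ((θ - φ) / 2)| := by
  calc |sin (k * θ)| = |sin (k * (θ - φ))| * |cos (k * φ)| := by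
        rw [show k * θ = k * (θ - φ) + k * φ by ring, sin_add, hφ, mul_zero, add_zero, abs_mul]
    _ ≤ |sin (k * (θ - φ))| := mul_le_of_le_one_right (abs_nonneg _) (abs_cos_le_one _)
    _ ≤ k * |sin (θ - φ)| := abs_sin_nat_mul_le k _
    _ ≤ k * (2 * |sin ((θ - φ) / 2)|) := by gcongr; exact abs_sin_le_two_mul_abs_sin_half _
    _ = 2 * k * |sin ((θ - φ) / 2)| := by ring

theorem abs_sin_mul_sin_nat_mul_le (k : ℕ) {θ φ : ℝ} (hθ : θ ∈ Set.Icc 0 π)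
    (hφ : φ ∈ Set.Icc 0 π) (hkφ : sin (k * φ) = 0) :
    |sin θ * sin (k * θ)| ≤ 2 * k * |cos θ - cos φ| := by
  have hsin : 0 ≤ sin θ := sin_nonneg_of_nonneg_of_le_pi hθ.1 hθ.2
  have hsum : 0 ≤ sin ((θ + φ) / 2) :=
    sin_nonneg_of_nonneg_of_le_pi (by linarith [hθ.1, hφ.1]) (by linarith [hθ.2, hφ.2])
  rw [cos_sub_cos, abs_mul, abs_mul, abs_mul, abs_neg, abs_two, abs_of_nonneg hsin,
    abs_of_nonneg hsum]
  have h₁ := sin_le_two_mul_sin_add_div_two hθ hφ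
  have h₂ := abs_sin_nat_mul_le_of_sin_nat_mul_eq_zero k θ hkφ
  calc sin θ * |sin (k * θ)| ≤ (2 * sin ((θ + φ) / 2)) * (2 * k * |sin ((θ - φ) / 2)|) := by
        gcongr
    _ = 2 * k * (2 * sin ((θ + φ) / 2) * |sin ((θ - φ) / 2)|) := by ring

end Real

namespace Polynomial.Chebyshev

theorem derivative_X_sq_sub_one_mul_U (R : Type*) [CommRing R] (n : ℤ) :
    derivative ((X ^ 2 - 1) * U R n) = X * U R n + ((n : R[X]) + 1) * T R (n + 1) := by
  rw [add_one_mul_T_eq_poly_in_U, derivative_mul]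
  simp only [derivative_sub, derivative_X_sq, derivative_one, C_ofNat]
  ring

theorem C_two_pow_mul_nodal_node (n : ℕ) :
    Polynomial.C (2 ^ n : ℝ) * nodal (range (n + 2)) (node (n + 1)) = (X ^ 2 - 1) * U ℝ n := by
  have hinj := (range n).nodup_map_iff_injOn.mp (roots_U_real_nodup n)
  have hcard : Multiset.card (U ℝ n).roots = (U ℝ n).natDegree := by
    rw [roots_U_real, card_val, card_image_of_injOn hinj, card_range, natDegree_U_natCast]
  have hU := C_leadingCoeff_mul_prod_multiset_X_sub_C hcard
  rw [leadingCoeff_U_natCast, roots_U_real, ← prod_eq_multiset_prod, prod_image hinj] at hU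
  rw [nodal, prod_range_succ, prod_range_succ', node_eq_one,
    node_eq_neg_one (Nat.succ_ne_zero n), ← hU]
  simp only [node, map_one, map_neg]
  push_cast
  ring

theorem two_pow_mul_eval_nodal_node_cos (n : ℕ) (θ : ℝ) :
    2 ^ n * (nodal (range (n + 2)) (node (n + 1))).eval (cos θ) =
      -(sin θ * sin ((n + 1) * θ)) := by
  have h := congrArg (eval (cos θ)) (C_two_pow_mul_nodal_node n)
  rw [eval_mul, eval_C] at h
  rw [h]
  have hU := U_real_cos θ n
  push_cast at hU
  rw [← hU]
  simp only [eval_mul, eval_sub, eval_pow, eval_X, eval_one]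
  linear_combination (eval (cos θ) (U ℝ n)) * sin_sq_add_cos_sq θ

theorem two_pow_mul_prod_node_sub_node (n : ℕ) {i : ℕ} (hi : i ≤ n + 1) :
    2 ^ n * ∏ j ∈ (range (n + 2)).erase i, (node (n + 1) i - node (n + 1) j) =
      node (n + 1) i * (U ℝ n).eval (node (n + 1) i) + (n + 1) * (-1) ^ i := by
  have hmem : i ∈ range (n + 2) := mem_range.mpr (Nat.lt_succ_of_le hi)
  have h := congrArg (fun p => (derivative p).eval (node (n + 1) i)) (C_two_pow_mul_nodal_node n)
  simp only [derivative_C_mul, eval_mul, eval_C, eval_nodal_derivative_eval_node_eq hmem,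
    eval_nodal, derivative_X_sq_sub_one_mul_U] at h
  rw [h]
  have hT := eval_T_real_node (n := n + 1) (mem_Iic.mpr hi)
  push_cast at hT
  simp only [eval_add, eval_mul, eval_X, hT]
  push_cast
  simp

theorem eval_U_node_eq_zero (n : ℕ) {i : ℕ} (hi₀ : 0 < i) (hi : i < n + 1) :
    (U ℝ n).eval (node (n + 1) i) = 0 := by
  have hφ : 0 < (i : ℝ) * π / (n + 1 : ℕ) := by positivity
  have hφπ : (i : ℝ) * π / (n + 1 : ℕ) < π := by
    rw [div_lt_iff₀ (by positivity)]
    have : (i : ℝ) < (n + 1 : ℕ) := by exact_mod_cast hi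
    nlinarith [pi_pos]
  have hU := U_real_cos ((i : ℝ) * π / (n + 1 : ℕ)) n
  have hk : ((n : ℤ) + 1 : ℝ) * ((i : ℝ) * π / (n + 1 : ℕ)) = i * π := by
    push_cast; field_simp
  rw [hk, sin_nat_mul_pi] at hU
  exact (mul_eq_zero.mp hU).resolve_right (sin_pos_of_pos_of_lt_pi hφ hφπ).ne'

theorem neg_one_pow_mul_node_mul_eval_U_nonneg (n : ℕ) {i : ℕ} (hi : i ≤ n + 1) :
    0 ≤ (-1) ^ i * (node (n + 1) i * (U ℝ n).eval (node (n + 1) i)) := by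
  rcases Nat.eq_zero_or_pos i with rfl | hi₀
  · rw [node_eq_one, U_eval_one]
    push_cast
    positivity
  rcases hi.lt_or_eq with hi | rfl
  · rw [eval_U_node_eq_zero n hi₀ hi]
    simp
  · rw [node_eq_neg_one (Nat.succ_ne_zero n), U_eval_neg_one, Int.cast_negOnePow_natCast]
    rw [show (-1 : ℝ) ^ (n + 1) * (-1 * ((-1) ^ n * ((n : ℤ) + 1 : ℝ))) =
      ((-1) ^ n) ^ 2 * (n + 1) by push_cast; ring]
    positivity

theorem le_abs_prod_node_sub_node (n : ℕ) {i : ℕ} (hi : i ≤ n + 1) :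
    (n + 1) / 2 ^ n ≤ |∏ j ∈ (range (n + 2)).erase i, (node (n + 1) i - node (n + 1) j)| := by
  set P := ∏ j ∈ (range (n + 2)).erase i, (node (n + 1) i - node (n + 1) j)
  have hsq : ((-1 : ℝ) ^ i) ^ 2 = 1 := by rw [← pow_mul, mul_comm, pow_mul, neg_one_sq, one_pow]
  rw [div_le_iff₀ (by positivity)]
  calc (n + 1 : ℝ)
      ≤ (-1) ^ i * (node (n + 1) i * (U ℝ n).eval (node (n + 1) i)) + (n + 1) :=
        le_add_of_nonneg_left (neg_one_pow_mul_node_mul_eval_U_nonneg n hi)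
    _ = (-1) ^ i * (2 ^ n * P) := by
        rw [two_pow_mul_prod_node_sub_node n hi]; linear_combination (-(n + 1 : ℝ)) * hsq
    _ ≤ |(-1) ^ i * (2 ^ n * P)| := le_abs_self _
    _ = |P| * 2 ^ n := by rw [abs_mul, abs_neg_one_pow, abs_mul, abs_pow, abs_two]; ring

theorem abs_prod_sub_node_le (n : ℕ) {i : ℕ} (hi : i ≤ n + 1) {t : ℝ} (ht : t ∈ Set.Icc (-1) 1)
    (hti : t ≠ node (n + 1) i) :
    |∏ j ∈ (range (n + 2)).erase i, (t - node (n + 1) j)| ≤ 2 * (n + 1) / 2 ^ n := by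
  set P := ∏ j ∈ (range (n + 2)).erase i, (t - node (n + 1) j)
  set φ := (i : ℝ) * π / (n + 1 : ℕ)
  have hφ : φ ∈ Set.Icc 0 π := by
    refine ⟨by positivity, div_le_of_le_mul₀ (by positivity) pi_pos.le ?_⟩
    have : (i : ℝ) ≤ (n + 1 : ℕ) := by exact_mod_cast hi
    nlinarith [pi_pos]
  have hkφ : sin ((n + 1 : ℕ) * φ) = 0 := by
    rw [mul_div_cancel₀ _ (by positivity)]; exact sin_nat_mul_pi i
  have hθ : arccos t ∈ Set.Icc 0 π := ⟨arccos_nonneg t, arccos_le_pi t⟩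
  have hcos : cos (arccos t) = t := cos_arccos ht.1 ht.2
  have hfactor : 2 ^ n * ((t - node (n + 1) i) * P) =
      -(sin (arccos t) * sin ((n + 1 : ℕ) * arccos t)) := by
    have hmem : i ∈ range (n + 2) := mem_range.mpr (Nat.lt_succ_of_le hi)
    have h := two_pow_mul_eval_nodal_node_cos n (arccos t)
    rw [hcos, nodal_eq_mul_nodal_erase hmem, eval_mul, eval_nodal] at h
    simpa using h
  have hbound := abs_sin_mul_sin_nat_mul_le (n + 1) hθ hφ hkφ
  rw [← abs_neg, ← hfactor, hcos, show cos φ = node (n + 1) i from rfl] at hbound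
  have hpos : 0 < |t - node (n + 1) i| := abs_pos.mpr (sub_ne_zero.mpr hti)
  rw [abs_mul, abs_mul, abs_of_pos (by positivity : (0 : ℝ) < 2 ^ n)] at hbound
  rw [le_div_iff₀ (by positivity), ← mul_le_mul_iff_of_pos_left hpos]
  push_cast at hbound
  linear_combination hbound

end Polynomial.Chebyshev

open Polynomial.Chebyshev

theorem chebyshev_lagrange_basis_bound_general (k : ℕ) :
    ∀ i ∈ Finset.range (k + 1), ∀ t ∈ Set.Ioo (-1 : ℝ) 1,
      |(∏ j ∈ Finset.range (k + 1) \ {i}, (t - Real.cos (j * π / k))) /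
        (∏ j ∈ Finset.range (k + 1) \ {i},
          (Real.cos (i * π / k) - Real.cos (j * π / k)))| ≤ 2 := by
  intro i hi t ht
  rcases k with _ | n
  · obtain rfl : i = 0 := by simpa using hi
    simp
  replace hi : i ≤ n + 1 := mem_range_succ_iff.mp hi
  change |(∏ j ∈ range (n + 2) \ {i}, (t - node (n + 1) j)) /
    ∏ j ∈ range (n + 2) \ {i}, (node (n + 1) i - node (n + 1) j)| ≤ 2
  rw [sdiff_singleton_eq_erase]
  have hlower := le_abs_prod_node_sub_node n hi
  have hpos := (by positivity : (0 : ℝ) < (n + 1) / 2 ^ n).trans_le hlower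
  by_cases hti : t = node (n + 1) i
  · rw [hti, div_self (abs_pos.mp hpos), abs_one]
    norm_num
  rw [abs_div, div_le_iff₀ hpos]
  calc _ ≤ (2 * (n + 1) / 2 ^ n : ℝ) := abs_prod_sub_node_le n hi (Set.Ioo_subset_Icc_self ht) hti
    _ = 2 * ((n + 1) / 2 ^ n) := by ring
    _ ≤ _ := by gcongr

theorem chebyshev_lagrange_basis_bound (k : ℕ) (hk : 0 < k) :
    ∀ i ∈ Finset.range (k + 1), ∀ t ∈ Set.Ioo (-1 : ℝ) 1,
      |(∏ j ∈ Finset.range (k + 1) \ {i}, (t - Real.cos (j * π / k))) /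
        (∏ j ∈ Finset.range (k + 1) \ {i},
          (Real.cos (i * π / k) - Real.cos (j * π / k)))| ≤ 2 :=
  chebyshev_lagrange_basis_bound_general k
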